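/- arXiv:2504.02644 — 2 statements merged into one kernel-verified Lean document; each statement's English description precedes it below -/
import Mathlib

section
/- Fast-track actions are optimal in the paint shop model: if the current downstream color p equals the color of the next upstream car and some buffer lane is empty (or more generally not full), then some optimal completing action sequence begins with storing that car into such a lane followed immediately by retrieving it, and this pair of actions yields reward 1 with no other reward forgone; formally, the maximum cumulative reward over sequences beginning with the store-then-immediate-retrieve of the matching car equals the overall maximum cumulative reward. -/
/-- A state of the paint shop buffer system: the remaining upstream sequence,
`L` FIFO buffer lanes (head of each list = front/rightmost car, retrieved first),
and the downstream sequence produced so far. -/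
structure PSState (L W : ℕ) where
  upstream : List ℕ
  buffer : Fin L → List ℕ
  downstream : List ℕ

namespace PS

/-- Actions: store the front upstream car into a lane, or retrieve the front car of a lane. -/
inductive Action (L : ℕ) where
  | store (lane : Fin L)
  | retrieve (lane : Fin L)
  deriving DecidableEq

variable {L W : ℕ}

/-- Validity of an action in a state. -/
def Valid (s : PSState L W) : Action L → Prop
  | Action.store a => s.upstream ≠ [] ∧ (s.buffer a).length < W
  | Action.retrieve a => s.buffer a ≠ []

/-- Transition function; invalid actions leave the state unchanged. -/
def step (s : PSState L W) : Action L → PSState L W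
  | Action.store a =>
      if s.upstream ≠ [] ∧ (s.buffer a).length < W then
        { s with upstream := s.upstream.tail,
                 buffer := Function.update s.buffer a (s.buffer a ++ s.upstream.take 1) }
      else s
  | Action.retrieve a =>
      match s.buffer a with
      | [] => s
      | c :: rest =>
          { s with buffer := Function.update s.buffer a rest,
                   downstream := s.downstream ++ [c] }

/-- Run a sequence of actions from a state. -/
def run (s : PSState L W) (acts : List (Action L)) : PSState L W :=
  acts.foldl step s

/-- A sequence of actions is feasible from a state if every action is valid when performed. -/
def Feasible (s : PSState L W) : List (Action L) → Prop
  | [] => True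
  | a :: rest => Valid s a ∧ Feasible (step s a) rest

/-- A sequence of actions is complete if afterwards the upstream sequence and buffer are empty. -/
def Complete (s : PSState L W) (acts : List (Action L)) : Prop :=
  (run s acts).upstream = [] ∧ ∀ a, (run s acts).buffer a = []

/-- Initial state for upstream sequence `c` with empty buffer and empty downstream sequence. -/
def init (L W : ℕ) (c : List ℕ) : PSState L W :=
  ⟨c, fun _ => [], []⟩

/-- Reward function: 1 for a retrieval matching the current downstream color,
0 for a retrieval causing a color change, 0 for a valid store, −10 for invalid actions. -/
def reward (s : PSState L W) : Action L → ℤ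
  | Action.store a =>
      if s.upstream ≠ [] ∧ (s.buffer a).length < W then 0 else -10
  | Action.retrieve a =>
      match s.buffer a with
      | [] => -10
      | c :: _ => if s.downstream.getLast? = some c then 1 else 0

/-- Cumulative reward of an action sequence. -/
def cumReward (s : PSState L W) : List (Action L) → ℤ
  | [] => 0
  | a :: rest => reward s a + cumReward (step s a) rest

/-- Number of color changes (adjacent unequal pairs) in a sequence of colors. -/
def colorChanges : List ℕ → ℕ
  | a :: b :: t => (if a = b then 0 else 1) + colorChanges (b :: t)
  | _ => 0

def Action.isStore : Action L → Bool
  | Action.store _ => true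
  | Action.retrieve _ => false

def Action.isRetrieve : Action L → Bool
  | Action.store _ => false
  | Action.retrieve _ => true

/-- The buffer is completely full. -/
def BufferFull (s : PSState L W) : Prop := ∀ a, (s.buffer a).length = W

/-- The buffer is completely empty. -/
def BufferEmpty (s : PSState L W) : Prop := ∀ a, s.buffer a = []

/-- The state reached after performing the first `n` actions of a schedule. -/
def stateAt (s : PSState L W) (acts : List (Action L)) (n : ℕ) : PSState L W :=
  run s (acts.take n)

/-- A schedule follows the store-then-retrieve discipline: it alternates maximal phases,
storing until the buffer is full (or upstream is empty), then retrieving until the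
buffer is empty. Equivalently, at every switch from a store action to a retrieve action
the buffer is full or upstream empty, and at every switch from retrieve to store the
buffer is empty. -/
def StoreThenRetrieve (s : PSState L W) (acts : List (Action L)) : Prop :=
  ∀ i : ℕ, ∀ x y : Action L, acts[i]? = some x → acts[i+1]? = some y →
    (x.isStore = true → y.isRetrieve = true →
      BufferFull (stateAt s acts (i+1)) ∨ (stateAt s acts (i+1)).upstream = []) ∧
    (x.isRetrieve = true → y.isStore = true → BufferEmpty (stateAt s acts (i+1)))

end PS

/-!
Take an optimal complete schedule from `s` (rewards are bounded by the number of pending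
cars, so one exists) and delete from it the store and the retrieval of the car `p` at the
front of the upstream sequence. Every other action earns the same as before, as long as the
last downstream colours agree. Retrieving `p` earned at most `1`; if it earned `1`, the last
colours still agree afterwards, and if it earned `0`, the different last colour can cost at
most the next retrieval's reward. So the shortened schedule, run after the fast-track pair,
loses at most `1`, which the fast-track pair earns back.
-/

namespace PS

open Function

variable {L W : ℕ}

section Step

variable {s : PSState L W} {a : Fin L}

lemma step_of_not_valid {x : Action L} (h : ¬ Valid s x) : step s x = s := by
  cases x <;> simp only [Valid] at h
  · simp [step, h]
  · simp [step, not_not.mp h]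

lemma reward_of_not_valid {x : Action L} (h : ¬ Valid s x) : reward s x = -10 := by
  cases x <;> simp only [Valid] at h
  · simp [reward, h]
  · simp [reward, not_not.mp h]

lemma step_store {q : ℕ} {u : List ℕ} (hu : s.upstream = q :: u)
    (hlen : (s.buffer a).length < W) :
    step s (.store a) =
      { s with upstream := u, buffer := update s.buffer a (s.buffer a ++ [q]) } := by
  simp [step, hu, hlen]

lemma reward_store (h : Valid s (.store a)) : reward s (.store a) = 0 := by
  simp [reward, h.1, h.2]

lemma step_retrieve {c : ℕ} {r : List ℕ} (h : s.buffer a = c :: r) :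
    step s (.retrieve a) =
      { s with buffer := update s.buffer a r, downstream := s.downstream ++ [c] } := by
  simp [step, h]

lemma reward_retrieve {c : ℕ} {r : List ℕ} (h : s.buffer a = c :: r) :
    reward s (.retrieve a) = if s.downstream.getLast? = some c then 1 else 0 := by
  simp [reward, h]

lemma complete_cons {x : Action L} {acts : List (Action L)} :
    Complete s (x :: acts) ↔ Complete (step s x) acts := Iff.rfl

end Step

def pending (t : PSState L W) : ℕ :=
  t.upstream.length + ∑ c, (t.buffer c).length

lemma sum_length_update {ι α : Type*} [Fintype ι] [DecidableEq ι] (f : ι → List α) (a : ι)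
    (l : List α) :
    ∑ c, (update f a l c).length + (f a).length = ∑ c, (f c).length + l.length := by
  rw [← Finset.sum_erase_add _ _ (Finset.mem_univ a),
    ← Finset.sum_erase_add _ _ (Finset.mem_univ a),
    Finset.sum_congr rfl fun c hc => by rw [update_of_ne (Finset.ne_of_mem_erase hc)]]
  simp only [update_self]
  ring

lemma pending_step_store {t : PSState L W} {a : Fin L} (h : Valid t (.store a)) :
    pending (step t (.store a)) = pending t := by
  obtain ⟨q, u, hu⟩ := List.exists_cons_of_ne_nil h.1
  have := sum_length_update t.buffer a (t.buffer a ++ [q])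
  simp only [pending, step_store hu h.2, hu, List.length_append, List.length_cons,
    List.length_nil] at this ⊢
  omega

lemma pending_step_retrieve {t : PSState L W} {a : Fin L} {c : ℕ} {r : List ℕ}
    (h : t.buffer a = c :: r) : pending (step t (.retrieve a)) + 1 = pending t := by
  have := sum_length_update t.buffer a r
  simp only [pending, step_retrieve h, h, List.length_cons] at this ⊢
  omega

lemma pending_eq_zero {t : PSState L W} :
    pending t = 0 ↔ t.upstream = [] ∧ ∀ c, t.buffer c = [] := by
  simp [pending]

lemma reward_le_pending_sub_pending (t : PSState L W) (x : Action L) :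
    reward t x ≤ pending t - pending (step t x) := by
  by_cases hv : Valid t x
  · cases x with
    | store a => simp [reward_store hv, pending_step_store hv]
    | retrieve a =>
      obtain ⟨c, r, h⟩ := List.exists_cons_of_ne_nil hv
      have := pending_step_retrieve h
      rw [reward_retrieve h]
      split_ifs <;> omega
  · simp [step_of_not_valid hv, reward_of_not_valid hv]

lemma cumReward_le_pending (t : PSState L W) (acts : List (Action L)) :
    cumReward t acts ≤ pending t := by
  induction acts generalizing t with
  | nil => simp [cumReward]
  | cons x acts ih =>
    have := reward_le_pending_sub_pending t x
    have := ih (step t x)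
    simp only [cumReward]
    omega

lemma exists_feasible_complete (a : Fin L) (hW : 0 < W) (t : PSState L W) :
    ∃ acts, Feasible t acts ∧ Complete t acts := by
  induction hn : pending t generalizing t with
  | zero => exact ⟨[], trivial, pending_eq_zero.mp hn⟩
  | succ n ih =>
    by_cases hb : ∃ c, t.buffer c ≠ []
    · obtain ⟨c, hc⟩ := hb
      obtain ⟨d, r, h⟩ := List.exists_cons_of_ne_nil hc
      obtain ⟨acts, hf, hcomp⟩ :=
        ih (step t (.retrieve c)) (by have := pending_step_retrieve h; omega)
      exact ⟨.retrieve c :: acts, ⟨hc, hf⟩, hcomp⟩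
    · push Not at hb
      obtain ⟨q, u, hu⟩ : ∃ q u, t.upstream = q :: u := by
        refine List.exists_cons_of_ne_nil fun hu => ?_
        simp [pending_eq_zero.mpr ⟨hu, hb⟩] at hn
      have hs : Valid t (.store a) := ⟨by simp [hu], by simp [hb a, hW]⟩
      have hr : (step t (.store a)).buffer a = [q] := by simp [step_store hu hs.2, hb a]
      obtain ⟨acts, hf, hcomp⟩ := ih (step (step t (.store a)) (.retrieve a))
        (by have := pending_step_retrieve hr; have := pending_step_store hs; omega)
      exact ⟨.store a :: .retrieve a :: acts, ⟨hs, by simp [Valid, hr], hf⟩, hcomp⟩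

lemma exists_optimal_schedule (a : Fin L) (hW : 0 < W) (t : PSState L W) :
    ∃ acts, Feasible t acts ∧ Complete t acts ∧
      ∀ acts', Feasible t acts' → Complete t acts' →
        cumReward t acts' ≤ cumReward t acts := by
  obtain ⟨_, ⟨acts, hf, hc, rfl⟩, hmax⟩ := Int.exists_greatest_of_bdd
    (P := fun z => ∃ acts, Feasible t acts ∧ Complete t acts ∧ cumReward t acts = z)
    ⟨pending t, fun _ ⟨acts, _, _, hz⟩ => hz ▸ cumReward_le_pending t acts⟩
    (let ⟨acts, hf, hc⟩ := exists_feasible_complete a hW t; ⟨_, acts, hf, hc, rfl⟩)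
  exact ⟨acts, hf, hc, fun acts' hf' hc' => hmax _ ⟨acts', hf', hc', rfl⟩⟩

/-- Steps and rewards see the downstream sequence only through its last colour. -/
def EqUpToDownstream (t t' : PSState L W) : Prop :=
  t.upstream = t'.upstream ∧ t.buffer = t'.buffer

namespace EqUpToDownstream

variable {t t' : PSState L W}

lemma valid_iff (h : EqUpToDownstream t t') (x : Action L) : Valid t x ↔ Valid t' x := by
  cases x <;> simp [Valid, h.1, h.2]

lemma step (h : EqUpToDownstream t t') (x : Action L) :
    EqUpToDownstream (PS.step t x) (PS.step t' x) := by
  by_cases hv : Valid t x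
  · cases x with
    | store a =>
      obtain ⟨q, u, hu⟩ := List.exists_cons_of_ne_nil hv.1
      rw [step_store hu hv.2, step_store (h.1 ▸ hu) (h.2 ▸ hv.2)]
      exact ⟨rfl, by rw [h.2]⟩
    | retrieve a =>
      obtain ⟨c, r, hc⟩ := List.exists_cons_of_ne_nil hv
      rw [step_retrieve hc, step_retrieve (h.2 ▸ hc)]
      exact ⟨h.1, by rw [h.2]⟩
  · rwa [step_of_not_valid hv, step_of_not_valid ((h.valid_iff x).not.mp hv)]

lemma getLast?_step (h : EqUpToDownstream t t')
    (hl : t.downstream.getLast? = t'.downstream.getLast?) (x : Action L) :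
    (PS.step t x).downstream.getLast? = (PS.step t' x).downstream.getLast? := by
  cases x with
  | store a =>
    by_cases hv : Valid t (.store a)
    · obtain ⟨q, u, hu⟩ := List.exists_cons_of_ne_nil hv.1
      rwa [step_store hu hv.2, step_store (h.1 ▸ hu) (h.2 ▸ hv.2)]
    · rwa [step_of_not_valid hv, step_of_not_valid ((h.valid_iff _).not.mp hv)]
  | retrieve a =>
    cases hc : t.buffer a with
    | nil => simp [PS.step, hc, ← h.2, hl]
    | cons c r => simp [step_retrieve hc, step_retrieve (h.2 ▸ hc)]

lemma reward_eq (h : EqUpToDownstream t t')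
    (hl : t.downstream.getLast? = t'.downstream.getLast?) (x : Action L) :
    reward t x = reward t' x := by
  cases x <;> simp [reward, h.1, h.2, hl]

lemma feasible (h : EqUpToDownstream t t') {acts : List (Action L)} (hf : Feasible t acts) :
    Feasible t' acts := by
  induction acts generalizing t t' with
  | nil => trivial
  | cons x acts ih => exact ⟨(h.valid_iff x).mp hf.1, ih (h.step x) hf.2⟩

lemma complete (h : EqUpToDownstream t t') {acts : List (Action L)} (hc : Complete t acts) :
    Complete t' acts := by
  induction acts generalizing t t' with
  | nil => exact ⟨h.1 ▸ hc.1, h.2 ▸ hc.2⟩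
  | cons x acts ih => exact ih (h.step x) hc

lemma cumReward_eq (h : EqUpToDownstream t t')
    (hl : t.downstream.getLast? = t'.downstream.getLast?) (acts : List (Action L)) :
    cumReward t acts = cumReward t' acts := by
  induction acts generalizing t t' with
  | nil => rfl
  | cons x acts ih =>
    simp only [cumReward, h.reward_eq hl x, ih (h.step x) (h.getLast?_step hl x)]

lemma cumReward_le_add_one (h : EqUpToDownstream t t') (acts : List (Action L)) :
    cumReward t acts ≤ cumReward t' acts + 1 := by
  induction acts generalizing t t' with
  | nil => simp [cumReward]
  | cons x acts ih =>
    simp only [cumReward]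
    cases x with
    | store a =>
      have : reward t (.store a) = reward t' (.store a) := by simp [reward, h.1, h.2]
      have := ih (h.step (.store a))
      omega
    | retrieve a =>
      cases hc : t.buffer a with
      | nil =>
        have hc' : t'.buffer a = [] := h.2 ▸ hc
        have := ih h
        simp only [reward, PS.step, hc, hc']
        omega
      | cons c r =>
        have hc' : t'.buffer a = c :: r := h.2 ▸ hc
        rw [h.step (.retrieve a) |>.cumReward_eq (by simp [step_retrieve hc, step_retrieve hc'])
          acts, reward_retrieve hc, reward_retrieve hc']
        split_ifs <;> omega

end EqUpToDownstream

def ExtraCar (p : ℕ) (t t' : PSState L W) : Prop :=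
  (∃ u, t.upstream = p :: u ∧ t' = { t with upstream := u }) ∨
  ∃ b l₁ l₂, t.buffer b = l₁ ++ p :: l₂ ∧
    t' = { t with buffer := update t.buffer b (l₁ ++ l₂) }

namespace ExtraCar

variable {p : ℕ} {t t' : PSState L W} {a : Fin L}

lemma not_complete_nil (h : ExtraCar p t t') : ¬ Complete t [] := by
  rintro ⟨hu, hb⟩
  rcases h with ⟨u, hu', -⟩ | ⟨b, l₁, l₂, hb', -⟩
  · simp [run, hu'] at hu
  · simpa [run, hb'] using hb b

section Upstream

variable {u : List ℕ} (hu : t.upstream = p :: u) (ht' : t' = { t with upstream := u })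
include hu ht'

lemma step_store_of_upstream (hv : Valid t (.store a)) : ExtraCar p (step t (.store a)) t' := by
  subst ht'
  refine Or.inr ⟨a, t.buffer a, [], by simp [step_store hu hv.2], ?_⟩
  simp [step_store hu hv.2]

lemma step_retrieve_of_upstream (hv : Valid t (.retrieve a)) :
    Valid t' (.retrieve a) ∧ ExtraCar p (step t (.retrieve a)) (step t' (.retrieve a)) ∧
      reward t' (.retrieve a) = reward t (.retrieve a) := by
  subst ht'
  obtain ⟨c, r, hc⟩ := List.exists_cons_of_ne_nil hv
  refine ⟨hv, Or.inl ⟨u, by simp [step_retrieve hc, hu], ?_⟩, ?_⟩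
  · rw [step_retrieve hc, step_retrieve (s := { t with upstream := u }) hc]
  · rw [reward_retrieve hc, reward_retrieve (s := { t with upstream := u }) hc]

end Upstream

section Lane

variable {b : Fin L} {l₁ l₂ : List ℕ} (hb : t.buffer b = l₁ ++ p :: l₂)
  (ht' : t' = { t with buffer := update t.buffer b (l₁ ++ l₂) })
include hb ht'

lemma step_store_of_lane (hv : Valid t (.store a)) :
    Valid t' (.store a) ∧ ExtraCar p (step t (.store a)) (step t' (.store a)) ∧
      reward t' (.store a) = reward t (.store a) := by
  obtain ⟨q, u, hu⟩ := List.exists_cons_of_ne_nil hv.1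
  have hv' : Valid t' (.store a) := by
    subst ht'
    refine ⟨hv.1, ?_⟩
    by_cases hab : a = b
    · subst hab
      have := hv.2
      simp only [hb, List.length_append, List.length_cons] at this
      simp
      omega
    · simpa [update_of_ne hab] using hv.2
  refine ⟨hv', Or.inr ?_, by rw [reward_store hv, reward_store hv']⟩
  have hu' : t'.upstream = q :: u := by rw [ht']; exact hu
  rw [step_store hu hv.2, step_store hu' hv'.2]
  subst ht'
  by_cases hab : a = b
  · subst hab
    exact ⟨a, l₁, l₂ ++ [q], by simp [hb], by simp⟩
  · exact ⟨b, l₁, l₂, by simp [update_of_ne (Ne.symm hab), hb], by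
      simp [update_of_ne hab, update_comm hab]⟩

lemma step_retrieve_of_lane_of_ne (hab : a ≠ b) (hv : Valid t (.retrieve a)) :
    Valid t' (.retrieve a) ∧ ExtraCar p (step t (.retrieve a)) (step t' (.retrieve a)) ∧
      reward t' (.retrieve a) = reward t (.retrieve a) := by
  obtain ⟨c, r, hc⟩ := List.exists_cons_of_ne_nil hv
  have hc' : t'.buffer a = c :: r := by simp [ht', update_of_ne hab, hc]
  refine ⟨by simp [Valid, hc'], Or.inr ?_, by rw [reward_retrieve hc, reward_retrieve hc', ht']⟩
  rw [step_retrieve hc, step_retrieve hc']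
  subst ht'
  exact ⟨b, l₁, l₂, by simp [update_of_ne (Ne.symm hab), hb], by simp [update_comm hab]⟩

lemma step_retrieve_of_lane_of_cons {c : ℕ} {l : List ℕ} (hl₁ : l₁ = c :: l) :
    Valid t' (.retrieve b) ∧ ExtraCar p (step t (.retrieve b)) (step t' (.retrieve b)) ∧
      reward t' (.retrieve b) = reward t (.retrieve b) := by
  subst hl₁
  have hc' : t'.buffer b = c :: (l ++ l₂) := by simp [ht']
  refine ⟨by simp [Valid, hc'], Or.inr ?_, by rw [reward_retrieve hb, reward_retrieve hc', ht']⟩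
  rw [step_retrieve hb, step_retrieve hc']
  subst ht'
  exact ⟨b, l, l₂, by simp, by simp⟩

lemma step_retrieve_of_lane_of_nil (hl₁ : l₁ = []) :
    EqUpToDownstream (step t (.retrieve b)) t' ∧
      (step t (.retrieve b)).downstream.getLast? = some p ∧
      reward t (.retrieve b) = if t'.downstream.getLast? = some p then 1 else 0 := by
  subst hl₁ ht'
  rw [step_retrieve hb, reward_retrieve hb]
  exact ⟨⟨rfl, by simp⟩, by simp, rfl⟩

end Lane

lemma step_cases (h : ExtraCar p t t') {x : Action L} (hv : Valid t x) :
    (ExtraCar p (step t x) t' ∧ reward t x = 0) ∨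
    (EqUpToDownstream (step t x) t' ∧ (step t x).downstream.getLast? = some p ∧
      reward t x = if t'.downstream.getLast? = some p then 1 else 0) ∨
    (Valid t' x ∧ ExtraCar p (step t x) (step t' x) ∧ reward t' x = reward t x) := by
  rcases h with ⟨u, hu, ht'⟩ | ⟨b, l₁, l₂, hb, ht'⟩
  · cases x with
    | store a => exact .inl ⟨step_store_of_upstream hu ht' hv, reward_store hv⟩
    | retrieve a => exact .inr (.inr (step_retrieve_of_upstream hu ht' hv))
  · cases x with
    | store a => exact .inr (.inr (step_store_of_lane hb ht' hv))
    | retrieve a =>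
      by_cases hab : a = b
      · subst hab
        rcases l₁ with _ | ⟨c, l⟩
        · exact .inr (.inl (step_retrieve_of_lane_of_nil hb ht' rfl))
        · exact .inr (.inr (step_retrieve_of_lane_of_cons hb ht' rfl))
      · exact .inr (.inr (step_retrieve_of_lane_of_ne hb ht' hab hv))

lemma exists_schedule_cumReward_le_add_one (h : ExtraCar p t t') {acts : List (Action L)}
    (hf : Feasible t acts) (hc : Complete t acts) :
    ∃ acts', Feasible t' acts' ∧ Complete t' acts' ∧
      cumReward t acts ≤ cumReward t' acts' + 1 := by
  induction acts generalizing t t' with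
  | nil => exact absurd hc h.not_complete_nil
  | cons x acts ih =>
    obtain ⟨hv, hf⟩ := hf
    rw [complete_cons] at hc
    simp only [cumReward]
    rcases h.step_cases hv with ⟨h', hr⟩ | ⟨h', hl, hr⟩ | ⟨hv', h', hr⟩
    · obtain ⟨acts', hf', hc', hle⟩ := ih h' hf hc
      exact ⟨acts', hf', hc', by omega⟩
    · refine ⟨acts, h'.feasible hf, h'.complete hc, ?_⟩
      split_ifs at hr with hp
      · have := h'.cumReward_eq (hl.trans hp.symm) acts
        omega
      · have := h'.cumReward_le_add_one acts
        omega
    · obtain ⟨acts', hf', hc', hle⟩ := ih h' hf hc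
      exact ⟨x :: acts', ⟨hv', hf'⟩, hc', by simp only [cumReward]; omega⟩

end ExtraCar

/-- Fast-track actions are optimal: if the current downstream color `p` equals the
color of the next upstream car and lane `a` is empty, then some maximizer of the
cumulative reward over all feasible completing action sequences begins with storing
that car into lane `a` immediately followed by retrieving it, and this pair of
actions yields reward `1`. -/
theorem fast_track_optimal {L W : ℕ} (hW : 0 < W) (s : PSState L W) (a : Fin L) (p : ℕ)
    (hp : s.downstream.getLast? = some p) (hup : s.upstream.head? = some p)
    (hempty : s.buffer a = []) :
    ∃ acts : List (Action L), Feasible s acts ∧ Complete s acts ∧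
      acts.take 2 = [Action.store a, Action.retrieve a] ∧
      reward s (Action.store a) + reward (step s (Action.store a)) (Action.retrieve a) = 1 ∧
      ∀ acts' : List (Action L), Feasible s acts' → Complete s acts' →
        cumReward s acts' ≤ cumReward s acts := by
  obtain ⟨u, hu⟩ : ∃ u, s.upstream = p :: u := List.head?_eq_some_iff.mp hup
  have hstore : Valid s (.store a) := ⟨by simp [hu], by simp [hempty, hW]⟩
  have hlane : (step s (.store a)).buffer a = [p] := by simp [step_store hu hstore.2, hempty]
  have hpair : reward s (.store a) + reward (step s (.store a)) (.retrieve a) = 1 := by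
    rw [reward_store hstore, reward_retrieve hlane]
    simp [step_store hu hstore.2, hp]
  set s₁ : PSState L W := { s with upstream := u }
  set s₂ := step (step s (.store a)) (.retrieve a)
  have hs₂ : EqUpToDownstream s₁ s₂ := by
    simp [s₁, s₂, EqUpToDownstream, step_retrieve hlane, step_store hu hstore.2, hempty]
  have hlast : s₁.downstream.getLast? = s₂.downstream.getLast? := by
    simp [s₁, s₂, step_retrieve hlane, step_store hu hstore.2, hp]
  obtain ⟨acts₀, hf₀, hc₀, hopt⟩ := exists_optimal_schedule a hW s
  have hextra : ExtraCar p s s₁ := .inl ⟨u, hu, rfl⟩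
  obtain ⟨acts₁, hf₁, hc₁, hle⟩ := hextra.exists_schedule_cumReward_le_add_one hf₀ hc₀
  refine ⟨.store a :: .retrieve a :: acts₁,
    ⟨hstore, by simp [Valid, hlane], hs₂.feasible hf₁⟩, hs₂.complete hc₁, rfl, hpair,
    fun acts' hf' hc' => ?_⟩
  have hcum : cumReward s (.store a :: .retrieve a :: acts₁) = 1 + cumReward s₂ acts₁ := by
    rw [← hpair]
    simp only [cumReward, s₂]
    ring
  have := hopt acts' hf' hc'
  have := hs₂.cumReward_eq hlast acts₁
  omega

end PS
end

section
/- In the paint shop model, a greedy retrieval followed by an optimal continuation loses nothing: if lane a's front car has color equal to the current downstream color p in state s, then r(s, a) = 1 and the state s' after retrieving from lane a satisfies that the maximum cumulative reward from s equals 1 plus the maximum cumulative reward from s'. In particular, exchanging any first action of an optimal sequence with the greedy retrieval (and appropriately permuting the remaining actions) does not decrease cumulative reward. -/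
/-!
Erase the first `retrieve a` from any complete schedule from `s` (it must contain one, since
the car `p` has to leave lane `a`). Up to the erased action, the shortened schedule run from
the successor state sees the same states except that `p` is already downstream; as the
downstream sequence of `s` ends in `p`, the last downstream color, which is all a reward reads,
is unchanged. After it, the two runs differ only in their downstream sequences, which can change
the reward of the next retrieval by at most one, and not at all if the erased retrieval itself
matched colors. So every complete schedule from `s` earns at most `1 + M`.
-/

namespace PS

variable {L W : ℕ}

def EqExceptDownstream (u u' : PSState L W) : Prop :=
  u.upstream = u'.upstream ∧ u.buffer = u'.buffer

namespace EqExceptDownstream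

variable {u u' : PSState L W}

theorem step (h : EqExceptDownstream u u') (x : Action L) :
    EqExceptDownstream (PS.step u x) (PS.step u' x) := by
  obtain ⟨hu, hb⟩ := h
  cases x with
  | store b =>
    simp only [PS.step, hu, hb]
    split_ifs
    · exact ⟨rfl, rfl⟩
    · exact ⟨hu, hb⟩
  | retrieve b =>
    simp only [PS.step, hb]
    split
    · exact ⟨hu, hb⟩
    · exact ⟨hu, rfl⟩

theorem valid_iff (h : EqExceptDownstream u u') (x : Action L) : Valid u x ↔ Valid u' x := by
  obtain ⟨hu, hb⟩ := h
  cases x <;> simp only [Valid, hu, hb]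

theorem run (h : EqExceptDownstream u u') (acts : List (Action L)) :
    EqExceptDownstream (PS.run u acts) (PS.run u' acts) := by
  induction acts generalizing u u' with
  | nil => exact h
  | cons x rest ih => exact ih (h.step x)

theorem feasible (h : EqExceptDownstream u u') {acts : List (Action L)}
    (hf : Feasible u acts) : Feasible u' acts := by
  induction acts generalizing u u' with
  | nil => trivial
  | cons x rest ih => exact ⟨(h.valid_iff x).1 hf.1, ih (h.step x) hf.2⟩

theorem complete (h : EqExceptDownstream u u') {acts : List (Action L)}
    (hc : Complete u acts) : Complete u' acts := by
  obtain ⟨hu, hb⟩ := h.run acts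
  exact ⟨hu ▸ hc.1, hb ▸ hc.2⟩

theorem reward_eq (h : EqExceptDownstream u u')
    (hlast : u.downstream.getLast? = u'.downstream.getLast?) (x : Action L) :
    reward u x = reward u' x := by
  obtain ⟨hu, hb⟩ := h
  cases x <;> simp only [reward, hu, hb, hlast]

theorem getLast?_step (h : EqExceptDownstream u u')
    (hlast : u.downstream.getLast? = u'.downstream.getLast?) (x : Action L) :
    (PS.step u x).downstream.getLast? = (PS.step u' x).downstream.getLast? := by
  obtain ⟨hu, hb⟩ := h
  cases x with
  | store b => simp only [PS.step, hu, hb]; split_ifs <;> exact hlast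
  | retrieve b => simp only [PS.step, hb]; split <;> simp [hlast]

theorem cumReward_eq (h : EqExceptDownstream u u')
    (hlast : u.downstream.getLast? = u'.downstream.getLast?) (acts : List (Action L)) :
    cumReward u acts = cumReward u' acts := by
  induction acts generalizing u u' with
  | nil => rfl
  | cons x rest ih =>
    simp only [cumReward, h.reward_eq hlast x, ih (h.step x) (h.getLast?_step hlast x)]

theorem cumReward_le_add_one (h : EqExceptDownstream u u') (acts : List (Action L)) :
    cumReward u acts ≤ cumReward u' acts + 1 := by
  induction acts generalizing u u' with
  | nil => simp [cumReward]
  | cons x rest ih =>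
    have hstep := h.step x
    have ih' := ih hstep
    obtain ⟨hu, hb⟩ := h
    cases x with
    | store b =>
      have : reward u (.store b) = reward u' (.store b) := by simp only [reward, hu, hb]
      simp only [cumReward, this]
      omega
    | retrieve b =>
      rcases hlane : u'.buffer b with _ | ⟨c, rest'⟩
      · have : reward u (.retrieve b) = reward u' (.retrieve b) := by
          simp only [reward, hb, hlane]
        simp only [cumReward, this]
        omega
      · have hlast : (PS.step u (.retrieve b)).downstream.getLast? =
            (PS.step u' (.retrieve b)).downstream.getLast? := by
          simp [PS.step, hb, hlane]
        have htail := hstep.cumReward_eq hlast rest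
        have hle : reward u (.retrieve b) ≤ 1 := by
          simp only [reward, hb, hlane]; split_ifs <;> omega
        have hge : 0 ≤ reward u' (.retrieve b) := by
          simp only [reward, hlane]; split_ifs <;> omega
        simp only [cumReward, htail]
        omega

end EqExceptDownstream

/-- `t'` is `t` with the front car `p` of lane `a` already retrieved. Downstream sequences are
compared only through their last color, the only part of them that rewards read. -/
structure RetrievedAhead (a : Fin L) (p : ℕ) (t t' : PSState L W) : Prop where
  upstream_eq : t'.upstream = t.upstream
  buffer_of_ne : ∀ b, b ≠ a → t'.buffer b = t.buffer b
  buffer_self : t.buffer a = p :: t'.buffer a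
  getLast?_eq : t'.downstream.getLast? = t.downstream.getLast?

namespace RetrievedAhead

variable {a : Fin L} {p : ℕ} {t t' : PSState L W}

theorem valid (h : RetrievedAhead a p t t') {x : Action L} (hx : x ≠ .retrieve a)
    (hv : Valid t x) : Valid t' x := by
  cases x with
  | store b =>
    refine ⟨h.upstream_eq ▸ hv.1, ?_⟩
    by_cases hba : b = a
    · subst hba
      have := hv.2
      rw [h.buffer_self, List.length_cons] at this
      omega
    · exact h.buffer_of_ne b hba ▸ hv.2
  | retrieve b =>
    have hba : b ≠ a := fun hba => hx (hba ▸ rfl)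
    simpa only [Valid, h.buffer_of_ne b hba] using hv

theorem reward_eq (h : RetrievedAhead a p t t') {x : Action L} (hx : x ≠ .retrieve a)
    (hv : Valid t x) : reward t' x = reward t x := by
  cases x with
  | store b =>
    have hv' := h.valid hx hv
    simp only [Valid] at hv hv'
    simp only [reward, if_pos hv, if_pos hv']
  | retrieve b =>
    have hba : b ≠ a := fun hba => hx (hba ▸ rfl)
    simp only [reward, h.buffer_of_ne b hba, h.getLast?_eq]

theorem step (h : RetrievedAhead a p t t') {x : Action L} (hx : x ≠ .retrieve a)
    (hv : Valid t x) : RetrievedAhead a p (PS.step t x) (PS.step t' x) := by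
  cases x with
  | store b =>
    have hv' : Valid t' (.store b) := h.valid hx hv
    simp only [Valid] at hv hv'
    simp only [PS.step, if_pos hv, if_pos hv']
    refine ⟨by rw [h.upstream_eq], fun d hda => ?_, ?_, h.getLast?_eq⟩
    · simp only [Function.update_apply, h.buffer_of_ne d hda]
      split_ifs with hdb
      · rw [← hdb, h.buffer_of_ne d hda, h.upstream_eq]
      · rfl
    · by_cases hba : b = a
      · subst hba
        simp [h.buffer_self, h.upstream_eq]
      · simp [Function.update_of_ne (Ne.symm hba), h.buffer_self]
  | retrieve b =>
    have hba : b ≠ a := fun hba => hx (hba ▸ rfl)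
    obtain ⟨c, rest, hlane⟩ := List.exists_cons_of_ne_nil hv
    have hlane' : t'.buffer b = c :: rest := (h.buffer_of_ne b hba).trans hlane
    simp only [PS.step, hlane, hlane']
    refine ⟨h.upstream_eq, fun d hda => ?_, ?_, by simp⟩
    · simp only [Function.update_apply, h.buffer_of_ne d hda]
    · simp [Function.update_of_ne (Ne.symm hba), h.buffer_self]

theorem eqExceptDownstream_step_retrieve (h : RetrievedAhead a p t t') :
    EqExceptDownstream (PS.step t (.retrieve a)) t' := by
  simp only [PS.step, h.buffer_self]
  refine ⟨h.upstream_eq.symm, funext fun b => ?_⟩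
  simp only [Function.update_apply]
  split_ifs with hba
  · rw [hba]
  · exact (h.buffer_of_ne b hba).symm

theorem reward_retrieve_add_cumReward_le (h : RetrievedAhead a p t t')
    (acts : List (Action L)) :
    reward t (.retrieve a) + cumReward (PS.step t (.retrieve a)) acts ≤
      1 + cumReward t' acts := by
  have hEq := h.eqExceptDownstream_step_retrieve
  by_cases hlast : t.downstream.getLast? = some p
  · have hlast' : (PS.step t (.retrieve a)).downstream.getLast? = t'.downstream.getLast? := by
      simp [PS.step, h.buffer_self, h.getLast?_eq, hlast]
    simp only [reward, h.buffer_self, if_pos hlast, hEq.cumReward_eq hlast' acts, le_refl]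
  · simp only [reward, h.buffer_self, if_neg hlast, zero_add]
    linarith [hEq.cumReward_le_add_one acts]

theorem erase_retrieve (h : RetrievedAhead a p t t') {acts : List (Action L)}
    (hf : Feasible t acts) (hc : Complete t acts) :
    Feasible t' (acts.erase (.retrieve a)) ∧ Complete t' (acts.erase (.retrieve a)) ∧
      cumReward t acts ≤ 1 + cumReward t' (acts.erase (.retrieve a)) := by
  induction acts generalizing t t' with
  | nil => simpa [h.buffer_self, Complete, run] using hc.2 a
  | cons x rest ih =>
    by_cases hx : x = .retrieve a
    · subst hx
      have hEq := h.eqExceptDownstream_step_retrieve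
      simp only [List.erase_cons_head]
      exact ⟨hEq.feasible hf.2, hEq.complete hc, h.reward_retrieve_add_cumReward_le rest⟩
    · obtain ⟨hfr, hcr, hle⟩ := ih (h.step hx hf.1) hf.2 hc
      rw [List.erase_cons_tail (by simpa using hx)]
      refine ⟨⟨h.valid hx hf.1, hfr⟩, hcr, ?_⟩
      simp only [cumReward, h.reward_eq hx hf.1]
      linarith

end RetrievedAhead

/-- A greedy retrieval followed by an optimal continuation loses nothing: if lane
`a`'s front car has the color `p` of the current downstream color in state `s`,
then retrieving from lane `a` yields reward `1`, and the maximum cumulative reward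
over completing sequences from `s` equals `1` plus the maximum cumulative reward
over completing sequences from the successor state. -/
theorem greedy_retrieval_loses_nothing {L W : ℕ} (s : PSState L W) (a : Fin L) (p : ℕ)
    (hp : s.downstream.getLast? = some p) (hfront : (s.buffer a).head? = some p) :
    reward s (Action.retrieve a) = 1 ∧
    ∀ M : ℤ,
      IsGreatest {r : ℤ | ∃ acts : List (Action L),
        Feasible (step s (Action.retrieve a)) acts ∧
        Complete (step s (Action.retrieve a)) acts ∧
        cumReward (step s (Action.retrieve a)) acts = r} M →
      IsGreatest {r : ℤ | ∃ acts : List (Action L),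
        Feasible s acts ∧ Complete s acts ∧ cumReward s acts = r} (1 + M) := by
  obtain ⟨q, hq⟩ : ∃ q, s.buffer a = p :: q := List.head?_eq_some_iff.1 hfront
  have hreward : reward s (.retrieve a) = 1 := by simp [reward, hq, hp]
  have hahead : RetrievedAhead a p s (step s (.retrieve a)) :=
    ⟨by simp [step, hq], fun b hba => by simp [step, hq, hba], by simp [step, hq],
      by simp [step, hq, hp]⟩
  refine ⟨hreward, fun M ⟨⟨opt, hf, hc, hopt⟩, hmax⟩ => ⟨?_, ?_⟩⟩
  · exact ⟨.retrieve a :: opt, ⟨by simp [Valid, hq], hf⟩, hc, by simp [cumReward, hreward, hopt]⟩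
  · rintro _ ⟨acts, hf, hc, rfl⟩
    obtain ⟨hf', hc', hle⟩ := hahead.erase_retrieve hf hc
    linarith [hmax ⟨_, hf', hc', rfl⟩]

end PS
end
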